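/- arXiv:1412.5484 — 2 statements merged into one kernel-verified Lean document; each statement's English description precedes it below -/
import Mathlib

section
/- Let P : ZMod N → ℤ be any function and a : ℤ (the program's claimed value at 2^n). Suppose P is 1/8-far from every linear function: for every b : ℤ, |{x : P x ≠ b · (x.val : ℤ)}| ≥ N/8, where x.val ∈ {0, …, N−1} is the integer representative of x. Then either (N : ℤ) does not divide a, or, setting b := a / N and d x := P x − b · (x.val : ℤ), the quantities p₁ := |{x : d x + d (−x) ≠ 0}| / N and p₂ := |{(x, y) ∈ ZMod N × ZMod N : d y + d (x − y) ≠ d x}| / N² satisfy (1 − p₁)^96 · (1 − p₂)^709 ≤ 1/4. (Hence the general linearity property tester, which first checks 2^n ∣ P(2^n) and then runs the two tests with k₁ = 96 and k₂ = 709 independent uniform samples, returns FAIL with probability at least 3/4 on any P that is 1/8-far from linear.) -/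
/-!
This is the Blum–Luby–Rubinfeld argument. Let `m` be the number of pairs `(x, y)` with
`d x + d y ≠ d (x + y)` in a finite abelian group of order `N`, and let `g x` be the most frequent
value of `y ↦ d (x + y) - d y`. Each `g x` is missed by at most `2 m / N` values of `y`, so if
`6 m < N²` then some `y` witnesses `g (x₁ + x₂) = g x₁ + g x₂`, and `d` differs from `g` in at
most `3 m / N` points. Homomorphisms from a finite group to `ℤ` vanish, so when `d` is nonzero in
`N / 8` points, `m ≥ N² / 24`: a single RandSplit test fails with probability at least `1 / 24`,
and `(23 / 24) ^ 33 ≤ 1 / 4`.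
-/

open Finset

section Counting

variable {α β : Type*} [Fintype α]

lemma card_filter_prod_eq_sum [Fintype β] (Q : α → β → Prop) [∀ a b, Decidable (Q a b)] :
    #{p : α × β | Q p.1 p.2} = ∑ a, #{b | Q a b} := by
  simp only [card_filter, Fintype.sum_prod_type]

lemma exists_card_mul_card_ne_le [Nonempty α] [DecidableEq β] (u : α → β) :
    ∃ c, Fintype.card α * #{a | u a ≠ c} ≤ #{p : α × α | u p.1 ≠ u p.2} := by
  obtain ⟨a₀, -, ha₀⟩ := exists_max_image univ (fun a => #{b | u a = u b}) univ_nonempty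
  refine ⟨u a₀, ?_⟩
  have hfewest : ∀ a, #{b | u a₀ ≠ u b} ≤ #{b | u a ≠ u b} := fun a => by
    have h₀ := card_filter_add_card_filter_not (s := univ) (fun b => u a₀ = u b)
    have h := card_filter_add_card_filter_not (s := univ) (fun b => u a = u b)
    have := ha₀ a (mem_univ a)
    simp only [ne_eq] at h₀ h ⊢
    omega
  calc Fintype.card α * #{a | u a ≠ u a₀}
      = ∑ _a : α, #{b | u a₀ ≠ u b} := by simp [ne_comm]
    _ ≤ ∑ a, #{b | u a ≠ u b} := sum_le_sum fun a _ => hfewest a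
    _ = _ := (card_filter_prod_eq_sum fun a b => u a ≠ u b).symm

end Counting

section BLR

variable {G H : Type*} [AddCommGroup G] [Fintype G] [DecidableEq G] [AddCommGroup H]
  [DecidableEq H]

def additivityDefects (f : G → H) : Finset (G × G) := {p | f p.1 + f p.2 ≠ f (p.1 + p.2)}

omit [DecidableEq G] in
lemma card_comp_equiv_additivityDefects (f : G → H) (e : G × G ≃ G × G) :
    #{p : G × G | f (e p).1 + f (e p).2 ≠ f ((e p).1 + (e p).2)} = #(additivityDefects f) :=
  card_equiv e (by simp [additivityDefects])

lemma card_difference_ne_le (f : G → H) (x : G) :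
    #{p : G × G | f (x + p.1) - f p.1 ≠ f (x + p.2) - f p.2} ≤ 2 * #(additivityDefects f) := by
  have hleft := card_comp_equiv_additivityDefects f ((Equiv.addLeft x).prodCongr (Equiv.refl G))
  have hright := card_comp_equiv_additivityDefects f ((Equiv.refl G).prodCongr (Equiv.addLeft x))
  simp only [Equiv.prodCongr_apply, Prod.map_fst, Prod.map_snd, Equiv.coe_addLeft,
    Equiv.coe_refl, id] at hleft hright
  calc _ ≤ #(({p : G × G | f (x + p.1) + f p.2 ≠ f (x + p.1 + p.2)} : Finset _) ∪
        ({p : G × G | f p.1 + f (x + p.2) ≠ f (p.1 + (x + p.2))} : Finset _)) := by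
        refine card_le_card fun p => ?_
        simp only [mem_filter, mem_univ, true_and, mem_union]
        contrapose!
        rintro ⟨h₁, h₂⟩
        rw [sub_eq_sub_iff_add_eq_add, h₁, add_comm (f (x + p.2)), h₂, add_left_comm, add_assoc]
    _ ≤ _ := card_union_le _ _
    _ = 2 * #(additivityDefects f) := by rw [hleft, hright, two_mul]

omit [DecidableEq G] in
lemma card_additivityDefects_eq_card_split (f : G → H) :
    #{p : G × G | f p.2 + f (p.1 - p.2) ≠ f p.1} = #(additivityDefects f) :=
  card_equiv ((Equiv.prodComm G G).trans (Equiv.prodShear (Equiv.refl G) Equiv.subRight))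
    (by simp [additivityDefects])

lemma exists_card_mul_card_difference_ne_le (f : G → H) :
    ∃ g : G → H, ∀ x,
      Fintype.card G * #{y | f (x + y) - f y ≠ g x} ≤ 2 * #(additivityDefects f) := by
  choose g hg using fun x => exists_card_mul_card_ne_le fun y => f (x + y) - f y
  exact ⟨g, fun x => (hg x).trans (card_difference_ne_le f x)⟩

section MajorityDifference

variable {f g : G → H}
  (hg : ∀ x, Fintype.card G * #{y | f (x + y) - f y ≠ g x} ≤ 2 * #(additivityDefects f))
include hg

lemma map_add_of_card_mul_card_difference_ne_le
    (hsmall : 6 * #(additivityDefects f) < Fintype.card G ^ 2) (x₁ x₂ : G) :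
    g (x₁ + x₂) = g x₁ + g x₂ := by
  set U : Finset G := ({y | f (x₁ + y) - f y ≠ g x₁} : Finset G) ∪
    ({y | f (x₂ + (x₁ + y)) - f (x₁ + y) ≠ g x₂} : Finset G) ∪
    ({y | f (x₁ + x₂ + y) - f y ≠ g (x₁ + x₂)} : Finset G)
  have hshift : #{y | f (x₂ + (x₁ + y)) - f (x₁ + y) ≠ g x₂} = #{y | f (x₂ + y) - f y ≠ g x₂} :=
    card_equiv (Equiv.addLeft x₁) (by simp)
  have hU : Fintype.card G * #U ≤ 6 * #(additivityDefects f) := by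
    have hle : #U ≤ #{y | f (x₁ + y) - f y ≠ g x₁} + #{y | f (x₂ + y) - f y ≠ g x₂} +
        #{y | f (x₁ + x₂ + y) - f y ≠ g (x₁ + x₂)} := by
      rw [← hshift]
      exact (card_union_le _ _).trans (Nat.add_le_add_right (card_union_le _ _) _)
    nlinarith [hg x₁, hg x₂, hg (x₁ + x₂)]
  obtain ⟨y, hy⟩ : ∃ y, y ∉ U := by
    by_contra! hall
    have : Fintype.card G ≤ #U := card_le_card fun y _ => hall y
    nlinarith
  simp only [U, mem_union, mem_filter, mem_univ, true_and, not_or, not_not] at hy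
  obtain ⟨⟨h₁, h₂⟩, h₃⟩ := hy
  rw [← h₁, ← h₂, ← h₃, ← add_assoc, add_comm x₂ x₁]
  abel

lemma card_mul_card_ne_le_of_card_mul_card_difference_ne_le :
    Fintype.card G * #{x | f x ≠ g x} ≤ 3 * #(additivityDefects f) := by
  have hdisagree : #{p : G × G | f (p.1 + p.2) - f p.2 ≠ g p.1} ≤ 2 * #(additivityDefects f) := by
    rw [card_filter_prod_eq_sum (fun x y => f (x + y) - f y ≠ g x)]
    refine Nat.le_of_mul_le_mul_left ?_ (Fintype.card_pos (α := G))
    calc _ = ∑ x : G, Fintype.card G * #{y | f (x + y) - f y ≠ g x} := mul_sum _ _ _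
      _ ≤ ∑ _x : G, 2 * #(additivityDefects f) := sum_le_sum fun x _ => hg x
      _ = _ := by simp [mul_comm]
  have hagree : #{p : G × G | f p.1 ≠ g p.1 ∧ f (p.1 + p.2) - f p.2 = g p.1} ≤
      #(additivityDefects f) := by
    refine card_le_card fun p => ?_
    simp only [additivityDefects, mem_filter, mem_univ, true_and]
    rintro ⟨hne, heq⟩ hadd
    exact hne (by rw [← heq, ← hadd, add_sub_cancel_right])
  calc Fintype.card G * #{x | f x ≠ g x} = #{p : G × G | f p.1 ≠ g p.1} := by
        rw [← univ_product_univ, filter_product_left (fun x => f x ≠ g x), card_product,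
          card_univ, mul_comm]
    _ ≤ #{p : G × G | f p.1 ≠ g p.1 ∧ f (p.1 + p.2) - f p.2 = g p.1} +
        #{p : G × G | f (p.1 + p.2) - f p.2 ≠ g p.1} := by
        refine (card_le_card fun p => ?_).trans (card_union_le _ _)
        simp only [mem_filter, mem_univ, true_and, mem_union]
        tauto
    _ ≤ 3 * #(additivityDefects f) := by omega

end MajorityDifference

lemma exists_addMonoidHom_card_mul_card_ne_le (f : G → H)
    (hsmall : 6 * #(additivityDefects f) < Fintype.card G ^ 2) :
    ∃ φ : G →+ H, Fintype.card G * #{x | f x ≠ φ x} ≤ 3 * #(additivityDefects f) := by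
  obtain ⟨g, hg⟩ := exists_card_mul_card_difference_ne_le f
  exact ⟨AddMonoidHom.mk' g (map_add_of_card_mul_card_difference_ne_le hg hsmall),
    card_mul_card_ne_le_of_card_mul_card_difference_ne_le hg⟩

theorem card_sq_le_card_additivityDefects [IsAddTorsionFree H] (f : G → H)
    (hfar : Fintype.card G ≤ 8 * #{x | f x ≠ 0}) :
    Fintype.card G ^ 2 ≤ 24 * #(additivityDefects f) := by
  by_contra! hlt
  obtain ⟨φ, hφ⟩ := exists_addMonoidHom_card_mul_card_ne_le f (by omega)
  have hφ_zero : ∀ x, φ x = 0 := fun x =>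
    (nsmul_eq_zero_iff_right Fintype.card_ne_zero).1 (by rw [← map_nsmul, card_nsmul_eq_zero,
      map_zero])
  simp only [hφ_zero] at hφ
  nlinarith

end BLR

lemma cast_card_div_le_one {α : Type*} [Fintype α] (s : Finset α) {N : ℝ}
    (hN : Fintype.card α = N) : (#s : ℝ) / N ≤ 1 :=
  div_le_one_of_le₀ (hN ▸ Nat.cast_le.2 (card_le_univ s)) (hN ▸ Nat.cast_nonneg _)

lemma one_sub_pow_mul_one_sub_pow_le_one_fourth {x y : ℝ} (hx₀ : 0 ≤ x) (hx₁ : x ≤ 1)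
    (hy₀ : 1 / 24 ≤ y) (hy₁ : y ≤ 1) : (1 - x) ^ 96 * (1 - y) ^ 709 ≤ 1 / 4 :=
  calc (1 - x) ^ 96 * (1 - y) ^ 709
      ≤ 1 * (23 / 24) ^ 709 := by
        gcongr
        · exact pow_le_one₀ (by linarith) (by linarith)
        all_goals linarith
    _ ≤ (23 / 24) ^ 33 := by
        rw [one_mul]; exact pow_le_pow_of_le_one (by norm_num) (by norm_num) (by norm_num)
    _ ≤ 1 / 4 := by norm_num

theorem stmt_11 (n : ℕ) (P : ZMod (2 ^ n) → ℤ) (a : ℤ)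
    (hfar : ∀ b : ℤ,
      ((Finset.univ.filter fun x : ZMod (2 ^ n) => P x ≠ b * (x.val : ℤ)).card : ℝ) ≥ 2 ^ n / 8) :
    ¬ ((2 ^ n : ℤ) ∣ a) ∨
      (let b : ℤ := a / 2 ^ n
       let d : ZMod (2 ^ n) → ℤ := fun x => P x - b * (x.val : ℤ)
       (1 - ((Finset.univ.filter fun x : ZMod (2 ^ n) => d x + d (-x) ≠ 0).card : ℝ) / 2 ^ n) ^ 96 *
         (1 - ((Finset.univ.filter fun p : ZMod (2 ^ n) × ZMod (2 ^ n) =>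
             d p.2 + d (p.1 - p.2) ≠ d p.1).card : ℝ) / (2 ^ n) ^ 2) ^ 709 ≤ 1 / 4) := by
  right
  intro b d
  have hcard : (Fintype.card (ZMod (2 ^ n)) : ℝ) = 2 ^ n := by simp [ZMod.card]
  have hcard₂ : (Fintype.card (ZMod (2 ^ n) × ZMod (2 ^ n)) : ℝ) = (2 ^ n) ^ 2 := by
    simp [ZMod.card, sq]
  have hd_far : Fintype.card (ZMod (2 ^ n)) ≤ 8 * #{x | d x ≠ 0} := by
    have h := hfar b
    simp only [d, ne_eq, sub_eq_zero] at h ⊢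
    rw [← Nat.cast_le (α := ℝ), hcard]
    push_cast
    linarith
  have hdefects := card_sq_le_card_additivityDefects d hd_far
  rw [← card_additivityDefects_eq_card_split] at hdefects
  refine one_sub_pow_mul_one_sub_pow_le_one_fourth (by positivity) (cast_card_div_le_one _ hcard)
    ?_ (cast_card_div_le_one _ hcard₂)
  rw [div_le_div_iff₀ (by norm_num) (by positivity), one_mul, ← hcard, mul_comm]
  exact_mod_cast hdefects
end

section
/- Let V := Fin m → ZMod N be the space of m-dimensional vectors of n-bit numbers (componentwise addition modulo N = 2^n), so |V| = 2^{m·n}. Let d : V → ℤ be a discrepancy function with |{v : d v ≠ 0}| ≥ |V| / 8, i.e. the program P errs on at least 1/8 of the vectors. Define p₁ := |{v : d v + d (−v) ≠ 0}| / |V| and p₂ := |{(v, w) ∈ V × V : d w + d (v − w) ≠ d v}| / |V|². Then (1 − p₁)^96 · (1 − p₂)^709 ≤ 1/4. (Hence the self-testing algorithm for a linear homomorphism on V, running the first test 96 times and the RandSplitTwo test 709 times on independent uniform random choices, returns FAIL with probability at least 3/4.) -/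
/-!
If a discrepancy `d : G → ℤ` on a finite abelian group fails additivity on a fraction `δ < 1/6`
of the pairs, then for every `v` the vote `d (v + w) - d w` agrees on more than `2/3` of the `w`
(two votes disagree only where one of two translates of an additivity test fails, so collisions
have probability `≥ 1 - 2δ`). Three such majorities share a `w`, so the majority value `g v` is
additive; as `G` is finite and `ℤ` is torsion free, `g = 0`. Hence for `v` with `d v ≠ 0` a
fraction `≥ 1 - 2δ` of the `w` satisfy `d (v + w) = d w`, and each such pair is an additivity
failure. If `d v ≠ 0` on `1/8` of `G`, counting gives `δ ≥ 1/10`, so `(1 - p₂) ^ 709 ≤ (9/10) ^ 709`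
is already below `1/4`.
-/
open Finset

section Counting

variable {α β : Type*} [Fintype α]

lemma card_filter_prod_eq_sum_card [Fintype β] (P : α → β → Prop) [∀ a b, Decidable (P a b)] :
    #{p : α × β | P p.1 p.2} = ∑ a, #{b | P a b} := by
  simp only [card_filter, Fintype.sum_prod_type]

lemma exists_card_collisions_le_card_mul_card_fiber [Nonempty α] [DecidableEq β] (h : α → β) :
    ∃ c, #{p : α × α | h p.1 = h p.2} ≤ Fintype.card α * #{a | h a = c} := by
  obtain ⟨a₀, -, ha₀⟩ := exists_max_image univ (fun a => #{b | h a = h b}) univ_nonempty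
  refine ⟨h a₀, ?_⟩
  calc #{p : α × α | h p.1 = h p.2} = ∑ a, #{b | h a = h b} :=
      card_filter_prod_eq_sum_card fun a b => h a = h b
    _ ≤ ∑ _a : α, #{b | h a₀ = h b} := sum_le_sum fun a _ => ha₀ a (mem_univ a)
    _ = Fintype.card α * #{b | h b = h a₀} := by
      rw [sum_const, card_univ, smul_eq_mul, filter_congr fun _ _ => eq_comm]

lemma inter_inter_nonempty_of_three_card_gt [DecidableEq α] {s t r : Finset α}
    (hs : 2 * Fintype.card α < 3 * #s) (ht : 2 * Fintype.card α < 3 * #t)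
    (hr : 2 * Fintype.card α < 3 * #r) : (s ∩ t ∩ r).Nonempty := by
  rw [← card_pos]
  have := card_union_add_card_inter s t
  have := card_union_add_card_inter (s ∩ t) r
  have := card_le_univ (s ∪ t)
  have := card_le_univ (s ∩ t ∪ r)
  omega

lemma one_sub_card_div_card_nonneg (s : Finset α) : 0 ≤ 1 - (#s : ℝ) / Fintype.card α := by
  rw [sub_nonneg]
  exact div_le_one_of_le₀ (by exact_mod_cast card_le_univ s) (by positivity)

end Counting

lemma AddMonoidHom.eq_zero_of_finite {G A : Type*} [AddCommGroup G] [Finite G] [AddCommGroup A]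
    [IsAddTorsionFree A] (φ : G →+ A) : φ = 0 :=
  ext fun x => (φ.isOfFinAddOrder (isOfFinAddOrder_of_finite x)).eq_zero'

section Discrepancy

variable {G A : Type*} [AddCommGroup G] [Fintype G] [AddCommGroup A] [DecidableEq A] (d : G → A)

def additivityFailures : Finset (G × G) := {p | d p.1 + d p.2 ≠ d (p.1 + p.2)}

def splitFailures : Finset (G × G) := {p | d p.2 + d (p.1 - p.2) ≠ d p.1}

lemma card_splitFailures_eq : #(splitFailures d) = #(additivityFailures d) :=
  card_equiv ⟨fun p => (p.2, p.1 - p.2), fun q => (q.1 + q.2, q.1), fun p => by simp,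
    fun q => by simp⟩ fun p => by simp [splitFailures, additivityFailures]

lemma card_additivityFailures_translate (t : G) :
    #{p : G × G | d (t + p.1) + d (p.2 - p.1) ≠ d (t + p.2)} = #(additivityFailures d) :=
  card_equiv ⟨fun p => (t + p.1, p.2 - p.1), fun q => (q.1 - t, q.1 - t + q.2),
    fun p => by ext <;> simp, fun q => by ext <;> simp⟩ fun p => by simp [additivityFailures]

lemma card_vote_ne_le (v : G) :
    #{p : G × G | d (v + p.1) - d p.1 ≠ d (v + p.2) - d p.2} ≤ 2 * #(additivityFailures d) := by
  classical
  calc _ ≤ #(({p | d (0 + p.1) + d (p.2 - p.1) ≠ d (0 + p.2)} : Finset (G × G)) ∪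
          ({p | d (v + p.1) + d (p.2 - p.1) ≠ d (v + p.2)} : Finset (G × G))) := by
        refine card_le_card fun p hp => ?_
        simp only [mem_filter, mem_univ, true_and, mem_union, zero_add] at hp ⊢
        by_contra! h
        exact hp (by rw [← h.1, ← h.2]; abel)
    _ ≤ _ := (card_union_le _ _).trans_eq (by rw [card_additivityFailures_translate,
        card_additivityFailures_translate, two_mul])

lemma exists_card_vote_eq_ge (v : G) : ∃ c, Fintype.card G ^ 2 ≤
    Fintype.card G * #{w | d (v + w) - d w = c} + 2 * #(additivityFailures d) := by
  obtain ⟨c, hc⟩ := exists_card_collisions_le_card_mul_card_fiber fun w => d (v + w) - d w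
  refine ⟨c, ?_⟩
  have hsplit := card_filter_add_card_filter_not (s := (univ : Finset (G × G)))
    fun p => d (v + p.1) - d p.1 = d (v + p.2) - d p.2
  rw [card_univ, Fintype.card_prod, ← sq] at hsplit
  have := card_vote_ne_le d v
  simp only [ne_eq] at this hc
  omega

lemma majority_vote_add {u v : G} {a b c : A}
    (hu : 2 * Fintype.card G < 3 * #{w | d (u + w) - d w = a})
    (hv : 2 * Fintype.card G < 3 * #{w | d (v + w) - d w = b})
    (huv : 2 * Fintype.card G < 3 * #{w | d (u + v + w) - d w = c}) : c = a + b := by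
  have hv' : #{w | d (v + w) - d w = b} = #{w | d (v + (u + w)) - d (u + w) = b} :=
    (card_equiv (Equiv.addLeft u) fun w => by simp).symm
  classical
  obtain ⟨w, hw⟩ := inter_inter_nonempty_of_three_card_gt hu (hv' ▸ hv) huv
  simp only [mem_inter, mem_filter, mem_univ, true_and] at hw
  obtain ⟨⟨rfl, rfl⟩, rfl⟩ := hw
  rw [add_comm u v, add_assoc]
  abel

lemma card_sq_le_card_mul_card_stable [IsAddTorsionFree A]
    (hfew : 6 * #(additivityFailures d) < Fintype.card G ^ 2) (v : G) :
    Fintype.card G ^ 2 ≤ Fintype.card G * #{w | d (v + w) = d w} + 2 * #(additivityFailures d) := by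
  choose g hg using exists_card_vote_eq_ge d
  have hmajority (u : G) : 2 * Fintype.card G < 3 * #{w | d (u + w) - d w = g u} := by
    have := hg u
    refine Nat.lt_of_mul_lt_mul_left (a := Fintype.card G) ?_
    nlinarith
  let φ : G →+ A := AddMonoidHom.mk' g fun u v =>
    majority_vote_add d (hmajority u) (hmajority v) (hmajority (u + v))
  have hg0 : g v = 0 := DFunLike.congr_fun φ.eq_zero_of_finite v
  simpa only [hg0, sub_eq_zero] using hg v

lemma sum_card_stable_le_card_additivityFailures :
    ∑ v ∈ {v | d v ≠ 0}, #{w | d (v + w) = d w} ≤ #(additivityFailures d) := by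
  calc ∑ v ∈ {v | d v ≠ 0}, #{w | d (v + w) = d w}
      = #{p : G × G | d p.1 ≠ 0 ∧ d (p.1 + p.2) = d p.2} := by
        rw [card_filter_prod_eq_sum_card fun v w => d v ≠ 0 ∧ d (v + w) = d w, sum_filter]
        refine sum_congr rfl fun v _ => ?_
        split_ifs with hv <;> simp [hv]
    _ ≤ #(additivityFailures d) := by
        refine card_le_card fun p hp => ?_
        simp only [additivityFailures, mem_filter, mem_univ, true_and] at hp ⊢
        rw [hp.2, ne_eq, add_eq_right]
        exact hp.1

theorem card_sq_le_ten_mul_card_additivityFailures [IsAddTorsionFree A]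
    (hB : Fintype.card G ≤ 8 * #{v | d v ≠ 0}) :
    Fintype.card G ^ 2 ≤ 10 * #(additivityFailures d) := by
  by_cases hmany : Fintype.card G ^ 2 ≤ 6 * #(additivityFailures d)
  · omega
  have hstable := card_sq_le_card_mul_card_stable d (by omega)
  set K := Fintype.card G
  set F := #(additivityFailures d)
  set B : Finset G := {v | d v ≠ 0}
  have hsum : #B * K ^ 2 ≤ K * F + #B * (2 * F) :=
    calc #B * K ^ 2 = ∑ _v ∈ B, K ^ 2 := by rw [sum_const, smul_eq_mul]
      _ ≤ ∑ v ∈ B, (K * #{w | d (v + w) = d w} + 2 * F) := sum_le_sum fun v _ => hstable v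
      _ = K * ∑ v ∈ B, #{w | d (v + w) = d w} + #B * (2 * F) := by
        rw [sum_add_distrib, ← mul_sum, sum_const, smul_eq_mul]
      _ ≤ K * F + #B * (2 * F) := by
        gcongr
        exact sum_card_stable_le_card_additivityFailures d
  have hK : 0 < K := Fintype.card_pos
  -- multiply `K ≤ 8 #B` by `K² - 2F > 0` and combine with `hsum`
  refine Nat.le_of_mul_le_mul_left ?_ hK
  zify at hB hmany hsum ⊢
  nlinarith [mul_nonneg (sub_nonneg.2 hB) (by linarith : (0 : ℤ) ≤ K ^ 2 - 2 * F)]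

theorem card_sq_le_ten_mul_card_splitFailures [IsAddTorsionFree A]
    (hB : Fintype.card G ≤ 8 * #{v | d v ≠ 0}) :
    Fintype.card G ^ 2 ≤ 10 * #(splitFailures d) :=
  card_splitFailures_eq d ▸ card_sq_le_ten_mul_card_additivityFailures d hB

theorem one_sub_card_splitFailures_div_le [IsAddTorsionFree A]
    (hB : (Fintype.card G : ℝ) ≤ 8 * #{v | d v ≠ 0}) :
    1 - (#(splitFailures d) : ℝ) / Fintype.card G ^ 2 ≤ 9 / 10 := by
  have hsplit : (Fintype.card G : ℝ) ^ 2 ≤ 10 * #(splitFailures d) := by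
    exact_mod_cast card_sq_le_ten_mul_card_splitFailures d (by exact_mod_cast hB)
  rw [sub_le_comm, le_div_iff₀ (by positivity)]
  linarith

end Discrepancy

theorem stmt_12 (n m : ℕ) (d : (Fin m → ZMod (2 ^ n)) → ℤ)
    (herr : ((Finset.univ.filter fun v : Fin m → ZMod (2 ^ n) => d v ≠ 0).card : ℝ) ≥
      2 ^ (m * n) / 8) :
    (1 - ((Finset.univ.filter fun v : Fin m → ZMod (2 ^ n) => d v + d (-v) ≠ 0).card : ℝ) /
        2 ^ (m * n)) ^ 96 *
      (1 - ((Finset.univ.filter fun p : (Fin m → ZMod (2 ^ n)) × (Fin m → ZMod (2 ^ n)) =>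
          d p.2 + d (p.1 - p.2) ≠ d p.1).card : ℝ) / (2 ^ (m * n)) ^ 2) ^ 709 ≤ 1 / 4 := by
  have hcard : (Fintype.card (Fin m → ZMod (2 ^ n)) : ℝ) = 2 ^ (m * n) := by
    simp [ZMod.card, ← pow_mul, mul_comm]
  rw [← hcard] at herr ⊢
  have hfirst := one_sub_card_div_card_nonneg {v : Fin m → ZMod (2 ^ n) | d v + d (-v) ≠ 0}
  have hsecond := one_sub_card_splitFailures_div_le d (by linarith)
  have hsecond_nonneg : 0 ≤ 1 - (#(splitFailures d) : ℝ) /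
      Fintype.card (Fin m → ZMod (2 ^ n)) ^ 2 := by
    simpa only [Fintype.card_prod, Nat.cast_mul, sq] using
      one_sub_card_div_card_nonneg (splitFailures d)
  calc _ ≤ 1 * (9 / 10 : ℝ) ^ 709 :=
        mul_le_mul (pow_le_one₀ hfirst (sub_le_self _ (by positivity)))
          (pow_le_pow_left₀ hsecond_nonneg hsecond _) (by positivity) zero_le_one
    _ ≤ (9 / 10) ^ 14 := by
        rw [one_mul]
        exact pow_le_pow_of_le_one (by norm_num) (by norm_num) (by norm_num)
    _ ≤ 1 / 4 := by norm_num
end
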